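/- Let M ≥ 2 and a: ℤ → ℂ a finitely supported mask with order J ≥ 1 sum rules with respect to M and ∑_k a(k) = c ≠ 0. Write ã(z) = (1+z+⋯+z^{M−1})^J b̃(z) and for j = 0, …, J set b̃_j(z) := (1+z+⋯+z^{M−1})^{J−j} b̃(z). Let T_{a,M,γ} and T_{b_j,M,γ} be the shifted transition operators. Then for every finitely supported sequence v and j = 0, …, J, T_{a,M,γ}(∇^j v) = ∇^j (T_{b_j,M,γ} v), where ∇ is the backward difference operator. -/

import Mathlib

/-- The symbol `ã(z) = ∑_k a(k) z^k` of a sequence, as a Laurent polynomial. -/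
noncomputable def symb (a : ℤ → ℂ) : LaurentPolynomial ℂ :=
  ∑ᶠ k : ℤ, LaurentPolynomial.C (a k) * LaurentPolynomial.T k

/-- The shifted transition operator `(T_{a,M,γ} v)(n) = M ∑_k a(k) v(γ + M n - k)`. -/
noncomputable def transOp (M : ℕ) (γ : ℤ) (a : ℤ → ℂ) (v : ℤ → ℂ) : ℤ → ℂ :=
  fun n => (M : ℂ) * ∑ᶠ k : ℤ, a k * v (γ + (M : ℤ) * n - k)

/-- Backward difference `(∇v)(k) = v(k) - v(k-1)`. -/
def bdiff (v : ℤ → ℂ) : ℤ → ℂ := fun k => v k - v (k - 1)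

/-!
A factor `1 + z + ⋯ + z^{M-1}` in the symbol means `A(k) = ∑_{i<M} B(k-i)`. Convolving `∇v`
with such an `A` telescopes to `(B ⋆ v)(m) - (B ⋆ v)(m - M)`, and sampling at `m = γ + M n` turns
the shift by `M` into a backward difference in `n`: `T_A ∇ = ∇ T_B`. Iterating this along the chain
`a = b_0, b_1, …, b_J`, where `b̃_j = (1 + ⋯ + z^{M-1}) b̃_{j+1}`, gives the theorem.
-/

open LaurentPolynomial Finset

theorem LaurentPolynomial.coeff_T_mul {R : Type*} [Semiring R] (n m : ℤ) (f : R[T;T⁻¹]) :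
    (T n * f).coeff m = f.coeff (m - n) := by
  rw [show (T n : R[T;T⁻¹]) = .single n 1 from rfl, AddMonoidAlgebra.coeff_single_mul_apply,
    one_mul, neg_add_eq_sub]

theorem LaurentPolynomial.coeff_geomSum_T_mul {R : Type*} [Semiring R] (M : ℕ) (f : R[T;T⁻¹])
    (k : ℤ) : ((∑ i ∈ range M, T (i : ℤ)) * f).coeff k = ∑ i ∈ range M, f.coeff (k - i) := by
  simp only [Finset.sum_mul, AddMonoidAlgebra.coeff_sum, Finsupp.finsetSum_apply, coeff_T_mul]

theorem coeff_symb {a : ℤ → ℂ} (ha : (Function.support a).Finite) (m : ℤ) :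
    (symb a).coeff m = a m := by
  rw [symb, finsum_eq_sum_of_support_subset (s := ha.toFinset), AddMonoidAlgebra.coeff_sum,
    Finsupp.finsetSum_apply]
  · simp +contextual [← single_eq_C_mul_T, AddMonoidAlgebra.coeff_single, Finsupp.single_apply,
      eq_comm]
  · intro k hk
    simp_all

theorem symb_injOn : Set.InjOn symb {a : ℤ → ℂ | (Function.support a).Finite} :=
  fun a ha b hb h => funext fun k => by rw [← coeff_symb ha, ← coeff_symb hb, h]

theorem eq_sum_shift_of_symb_eq {A B : ℤ → ℂ} (hA : (Function.support A).Finite)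
    (hB : (Function.support B).Finite) {M : ℕ}
    (h : symb A = (∑ i ∈ range M, T (i : ℤ)) * symb B) (k : ℤ) :
    A k = ∑ i ∈ range M, B (k - i) := by
  simp only [← coeff_symb hA, h, coeff_geomSum_T_mul, coeff_symb hB]

noncomputable def discreteConv (a v : ℤ → ℂ) (m : ℤ) : ℂ :=
  ∑ᶠ k : ℤ, a k * v (m - k)

theorem transOp_eq_discreteConv (M : ℕ) (γ : ℤ) (a v : ℤ → ℂ) (n : ℤ) :
    transOp M γ a v n = M * discreteConv a v (γ + M * n) :=
  rfl

theorem discreteConv_comp_sub_right (B w : ℤ → ℂ) (i m : ℤ) :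
    discreteConv (fun k => B (k - i)) w m = discreteConv B w (m - i) := by
  rw [discreteConv, ← finsum_comp_equiv (Equiv.addRight i)]
  simp only [Equiv.coe_addRight, add_sub_cancel_right, discreteConv]
  exact finsum_congr fun k => by rw [sub_sub, add_comm i]

theorem discreteConv_bdiff {B : ℤ → ℂ} (hB : (Function.support B).Finite) (v : ℤ → ℂ) (m : ℤ) :
    discreteConv B (bdiff v) m = discreteConv B v m - discreteConv B v (m - 1) := by
  have hfin (w : ℤ → ℂ) : (Function.support fun k => B k * w k).Finite :=
    hB.subset (Function.support_mul_subset_left _ _)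
  simp only [discreteConv, bdiff, mul_sub]
  rw [finsum_sub_distrib (hfin _) (hfin _)]
  simp only [sub_right_comm]

theorem discreteConv_sum_shift {B : ℤ → ℂ} (hB : (Function.support B).Finite) (M : ℕ)
    (w : ℤ → ℂ) (m : ℤ) :
    discreteConv (fun k => ∑ i ∈ range M, B (k - i)) w m
      = ∑ i ∈ range M, discreteConv B w (m - i) := by
  have hfin (i : ℕ) : (Function.support fun k => B (k - i) * w (m - k)).Finite :=
    (hB.preimage sub_left_injective.injOn).subset (Function.support_mul_subset_left _ _)
  simp only [discreteConv, Finset.sum_mul]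
  rw [finsum_sum_comm _ _ fun i _ => hfin i]
  exact sum_congr rfl fun i _ => discreteConv_comp_sub_right B w i m

theorem discreteConv_sum_shift_bdiff {B : ℤ → ℂ} (hB : (Function.support B).Finite)
    (M : ℕ) (v : ℤ → ℂ) (m : ℤ) :
    discreteConv (fun k => ∑ i ∈ range M, B (k - i)) (bdiff v) m
      = discreteConv B v m - discreteConv B v (m - M) := by
  rw [discreteConv_sum_shift hB]
  convert sum_range_sub' (fun i : ℕ => discreteConv B v (m - i)) M using 2 with i
  · rw [discreteConv_bdiff hB]
    push_cast
    ring_nf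
  · simp

theorem transOp_bdiff_of_symb_eq {A B : ℤ → ℂ} (hA : (Function.support A).Finite)
    (hB : (Function.support B).Finite) (M : ℕ) (γ : ℤ)
    (h : symb A = (∑ i ∈ range M, T (i : ℤ)) * symb B) (v : ℤ → ℂ) :
    transOp M γ A (bdiff v) = bdiff (transOp M γ B v) := by
  obtain rfl : A = fun k => ∑ i ∈ range M, B (k - i) := funext (eq_sum_shift_of_symb_eq hA hB h)
  funext n
  simp only [transOp_eq_discreteConv, bdiff, discreteConv_sum_shift_bdiff hB, mul_sub]
  congr 3
  ring

theorem transOp_iterate_bdiff_of_symb_eq (M : ℕ) (γ : ℤ) (b : ℕ → ℤ → ℂ)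
    (hb : ∀ j, (Function.support (b j)).Finite) (n : ℕ)
    (h : ∀ j < n, symb (b j) = (∑ i ∈ range M, T (i : ℤ)) * symb (b (j + 1))) (v : ℤ → ℂ) :
    transOp M γ (b 0) (bdiff^[n] v) = bdiff^[n] (transOp M γ (b n) v) := by
  induction n generalizing v with
  | zero => rfl
  | succ n ih =>
    rw [Function.iterate_succ_apply, ih (fun j hj => h j (by omega)),
      transOp_bdiff_of_symb_eq (hb n) (hb (n + 1)) M γ (h n n.lt_succ_self),
      ← Function.iterate_succ_apply]

theorem transOp_bdiff_commute_general (M : ℕ) (γ : ℤ) (J : ℕ)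
    (a b : ℤ → ℂ) (ha : (Function.support a).Finite)
    (hab : symb a = (∑ i ∈ Finset.range M, LaurentPolynomial.T (i : ℤ)) ^ J * symb b)
    (b' : ℕ → ℤ → ℂ) (hb'fin : ∀ j : ℕ, (Function.support (b' j)).Finite)
    (hb'symb : ∀ j : ℕ, j ≤ J →
      symb (b' j) = (∑ i ∈ Finset.range M, LaurentPolynomial.T (i : ℤ)) ^ (J - j) * symb b) :
    ∀ j : ℕ, j ≤ J → ∀ v : ℤ → ℂ, (Function.support v).Finite →
      ∀ n : ℤ, transOp M γ a (bdiff^[j] v) n = bdiff^[j] (transOp M γ (b' j) v) n := by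
  intro j hj v _ n
  have ha0 : a = b' 0 := symb_injOn ha (hb'fin 0) (by rw [hab, hb'symb 0 J.zero_le, J.sub_zero])
  have hchain (k : ℕ) (hk : k < j) :
      symb (b' k) = (∑ i ∈ range M, T (i : ℤ)) * symb (b' (k + 1)) := by
    rw [hb'symb k (by omega), hb'symb (k + 1) (by omega), ← mul_assoc, ← pow_succ',
      show J - k = J - (k + 1) + 1 by omega]
  rw [ha0, transOp_iterate_bdiff_of_symb_eq M γ b' hb'fin j hchain]

theorem transOp_bdiff_commute (M : ℕ) (hM : 2 ≤ M) (γ : ℤ) (J : ℕ) (hJ : 1 ≤ J)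
    (a b : ℤ → ℂ) (ha : (Function.support a).Finite)
    (hb : (Function.support b).Finite)
    (c : ℂ) (hc : c ≠ 0) (hsum : ∑ᶠ k : ℤ, a k = c)
    (hab : symb a = (∑ i ∈ Finset.range M, LaurentPolynomial.T (i : ℤ)) ^ J * symb b)
    (b' : ℕ → ℤ → ℂ) (hb'fin : ∀ j : ℕ, (Function.support (b' j)).Finite)
    (hb'symb : ∀ j : ℕ, j ≤ J →
      symb (b' j) = (∑ i ∈ Finset.range M, LaurentPolynomial.T (i : ℤ)) ^ (J - j) * symb b) :
    ∀ j : ℕ, j ≤ J → ∀ v : ℤ → ℂ, (Function.support v).Finite →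
      ∀ n : ℤ, transOp M γ a (bdiff^[j] v) n = bdiff^[j] (transOp M γ (b' j) v) n :=
  transOp_bdiff_commute_general M γ J a b ha hab b' hb'fin hb'symb
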